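/- Let E, B and E', B' be two smooth solutions of curl E + ∂B/∂t + σₘ B = 0, curl B − ∂E/∂t − σₑ E = 0. Define τ(x,t) = ∂E/∂t(x,t)·E'(x,−t) − ∂B/∂t(x,t)·B'(x,−t) and χ(x,t) = B'(x,−t) × ∂E/∂t(x,t) + E'(x,−t) × ∂B/∂t(x,t). Then ∂τ/∂t + div χ = 0. -/

import Mathlib

noncomputable section

abbrev V3 : Type := Fin 3 → ℝ

def dot3 (a b : V3) : ℝ := a 0 * b 0 + a 1 * b 1 + a 2 * b 2

def cross3 (a b : V3) : V3 :=
  ![a 1 * b 2 - a 2 * b 1, a 2 * b 0 - a 0 * b 2, a 0 * b 1 - a 1 * b 0]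

/-- spatial partial derivative of a scalar field on ℝ³ -/
def pd (i : Fin 3) (f : V3 → ℝ) (x : V3) : ℝ := fderiv ℝ f x (Pi.single i 1)

/-- spatial divergence -/
def div3 (F : V3 → V3) (x : V3) : ℝ :=
  pd 0 (fun y => F y 0) x + pd 1 (fun y => F y 1) x + pd 2 (fun y => F y 2) x

/-- spatial curl -/
def curl3 (F : V3 → V3) (x : V3) : V3 :=
  ![pd 1 (fun y => F y 2) x - pd 2 (fun y => F y 1) x,
    pd 2 (fun y => F y 0) x - pd 0 (fun y => F y 2) x,
    pd 0 (fun y => F y 1) x - pd 1 (fun y => F y 0) x]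

/-- time derivative of a time-dependent vector field -/
def dt (F : V3 → ℝ → V3) (x : V3) (t : ℝ) : V3 := fun i => deriv (fun s => F x s i) t

/-- smoothness of a time-dependent vector field -/
def Smooth2 (F : V3 → ℝ → V3) : Prop := ContDiff ℝ (⊤ : ℕ∞) (fun p : V3 × ℝ => F p.1 p.2)

/-- smoothness of a time-dependent scalar field -/
def SmoothS (f : V3 → ℝ → ℝ) : Prop := ContDiff ℝ (⊤ : ℕ∞) (fun p : V3 × ℝ => f p.1 p.2)

section aux
variable {f : V3 × ℝ → ℝ}

lemma aux_hasFDerivAt_slice1 (hf : ContDiff ℝ (⊤ : ℕ∞) f) (x : V3) (t : ℝ) :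
    HasFDerivAt (fun y => f (y, t))
      ((fderiv ℝ f (x, t)).comp ((ContinuousLinearMap.id ℝ V3).prod 0)) x :=
  (hf.differentiable (by simp) (x, t)).hasFDerivAt.comp x
    ((hasFDerivAt_id x).prodMk (hasFDerivAt_const t x))

lemma aux_diff_slice1 (hf : ContDiff ℝ (⊤ : ℕ∞) f) (x : V3) (t : ℝ) :
    DifferentiableAt ℝ (fun y => f (y, t)) x :=
  (aux_hasFDerivAt_slice1 hf x t).differentiableAt

lemma aux_pd_slice (hf : ContDiff ℝ (⊤ : ℕ∞) f) (i : Fin 3) (x : V3) (t : ℝ) :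
    pd i (fun y => f (y, t)) x = fderiv ℝ f (x, t) (Pi.single i 1, 0) := by
  rw [pd, (aux_hasFDerivAt_slice1 hf x t).fderiv]
  rfl

lemma aux_hasDerivAt_slice2 (hf : ContDiff ℝ (⊤ : ℕ∞) f) (x : V3) (t : ℝ) :
    HasDerivAt (fun s => f (x, s)) (fderiv ℝ f (x, t) (0, 1)) t := by
  have h := ((hf.differentiable (by simp) (x, t)).hasFDerivAt.comp t
    ((hasFDerivAt_const x t).prodMk (hasFDerivAt_id t))).hasDerivAt
  exact h

lemma aux_deriv_slice (hf : ContDiff ℝ (⊤ : ℕ∞) f) (x : V3) (t : ℝ) :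
    deriv (fun s => f (x, s)) t = fderiv ℝ f (x, t) (0, 1) :=
  (aux_hasDerivAt_slice2 hf x t).deriv

lemma aux_dd_smooth (hf : ContDiff ℝ (⊤ : ℕ∞) f) (v : V3 × ℝ) :
    ContDiff ℝ (⊤ : ℕ∞) (fun p => fderiv ℝ f p v) :=
  (hf.fderiv_right (by simp)).clm_apply contDiff_const

lemma aux_schwarz (hf : ContDiff ℝ (⊤ : ℕ∞) f) (q : V3 × ℝ) (v w : V3 × ℝ) :
    fderiv ℝ (fun p => fderiv ℝ f p v) q w = fderiv ℝ (fun p => fderiv ℝ f p w) q v := by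
  have hd : DifferentiableAt ℝ (fderiv ℝ f) q :=
    ((hf.fderiv_right (m := (⊤ : ℕ∞)) (by simp)).differentiable (by simp)) q
  have key : ∀ u w : V3 × ℝ,
      fderiv ℝ (fun p => fderiv ℝ f p u) q w = fderiv ℝ (fderiv ℝ f) q w u := by
    intro u w
    rw [fderiv_clm_apply hd (differentiableAt_const u)]
    simp
  rw [key, key]
  exact (hf.contDiffAt.isSymmSndFDerivAt (by rw [minSmoothness_of_isRCLikeNormedField]; exact WithTop.coe_le_coe.mpr (le_top : (2 : ℕ∞) ≤ ⊤))) w v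

lemma aux_pd_hasDerivAt (hf : ContDiff ℝ (⊤ : ℕ∞) f) (i : Fin 3) (x : V3) (t : ℝ) :
    HasDerivAt (fun s => pd i (fun y => f (y, s)) x)
      (pd i (fun y => fderiv ℝ f (y, t) ((0 : V3), 1)) x) t := by
  have h1 : (fun s => pd i (fun y => f (y, s)) x)
      = fun s => (fun p => fderiv ℝ f p (Pi.single i 1, 0)) (x, s) :=
    funext fun s => aux_pd_slice hf i x s
  rw [h1]
  have h2 := aux_hasDerivAt_slice2 (aux_dd_smooth hf (Pi.single i 1, 0)) x t
  have h3 : pd i (fun y => fderiv ℝ f (y, t) ((0 : V3), 1)) x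
      = fderiv ℝ (fun p => fderiv ℝ f p (Pi.single i 1, 0)) (x, t) (0, 1) := by
    rw [aux_pd_slice (aux_dd_smooth hf ((0 : V3), 1)) i x t,
      aux_schwarz hf (x, t) ((0 : V3), 1) (Pi.single i 1, 0)]
  rw [h3]
  exact h2

end aux

section pdlem
variable {c d : V3 → ℝ} {x : V3} {i : Fin 3}

lemma pd_add' (hc : DifferentiableAt ℝ c x) (hd : DifferentiableAt ℝ d x) :
    pd i (fun y => c y + d y) x = pd i c x + pd i d x := by
  simp [pd, fderiv_fun_add hc hd]

lemma pd_sub' (hc : DifferentiableAt ℝ c x) (hd : DifferentiableAt ℝ d x) :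
    pd i (fun y => c y - d y) x = pd i c x - pd i d x := by
  simp [pd, fderiv_fun_sub hc hd]

lemma pd_mul' (hc : DifferentiableAt ℝ c x) (hd : DifferentiableAt ℝ d x) :
    pd i (fun y => c y * d y) x = pd i c x * d x + c x * pd i d x := by
  simp only [pd, fderiv_fun_mul hc hd, ContinuousLinearMap.add_apply,
    ContinuousLinearMap.smul_apply, smul_eq_mul]
  ring
end pdlem

lemma div3_add {F G : V3 → V3} {x : V3}
    (hF : ∀ j, DifferentiableAt ℝ (fun y => F y j) x)
    (hG : ∀ j, DifferentiableAt ℝ (fun y => G y j) x) :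
    div3 (fun y => F y + G y) x = div3 F x + div3 G x := by
  simp only [div3, Pi.add_apply]
  rw [pd_add' (hF 0) (hG 0), pd_add' (hF 1) (hG 1), pd_add' (hF 2) (hG 2)]
  ring

lemma div3_cross {a b : V3 → V3} {x : V3}
    (ha : ∀ j, DifferentiableAt ℝ (fun y => a y j) x)
    (hb : ∀ j, DifferentiableAt ℝ (fun y => b y j) x) :
    div3 (fun y => cross3 (a y) (b y)) x
      = dot3 (b x) (curl3 a x) - dot3 (a x) (curl3 b x) := by
  have c0 : (fun y => (cross3 (a y) (b y)) 0) = fun y => a y 1 * b y 2 - a y 2 * b y 1 := by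
    funext y; simp [cross3]
  have c1 : (fun y => (cross3 (a y) (b y)) 1) = fun y => a y 2 * b y 0 - a y 0 * b y 2 := by
    funext y; simp [cross3]
  have c2 : (fun y => (cross3 (a y) (b y)) 2) = fun y => a y 0 * b y 1 - a y 1 * b y 0 := by
    funext y; simp [cross3]
  simp only [div3]
  rw [c0, c1, c2,
    pd_sub' ((ha 1).fun_mul (hb 2)) ((ha 2).fun_mul (hb 1)),
    pd_sub' ((ha 2).fun_mul (hb 0)) ((ha 0).fun_mul (hb 2)),
    pd_sub' ((ha 0).fun_mul (hb 1)) ((ha 1).fun_mul (hb 0)),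
    pd_mul' (ha 1) (hb 2), pd_mul' (ha 2) (hb 1),
    pd_mul' (ha 2) (hb 0), pd_mul' (ha 0) (hb 2),
    pd_mul' (ha 0) (hb 1), pd_mul' (ha 1) (hb 0)]
  simp only [dot3, curl3, Matrix.cons_val_zero, Matrix.cons_val_one, Matrix.head_cons,
    Matrix.cons_val_two, Matrix.tail_cons]
  ring

/-- time-derivative scalar field on product space -/
def g2 (F : V3 → ℝ → V3) (j : Fin 3) : V3 × ℝ → ℝ :=
  fun p => fderiv ℝ (fun q : V3 × ℝ => F q.1 q.2 j) p (0, 1)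

lemma g2_smooth {F : V3 → ℝ → V3} (hF : Smooth2 F) (j : Fin 3) : ContDiff ℝ (⊤ : ℕ∞) (g2 F j) :=
  aux_dd_smooth (contDiff_pi.mp hF j) _

lemma dt_eq {F : V3 → ℝ → V3} (hF : Smooth2 F) (x : V3) (t : ℝ) (j : Fin 3) :
    dt F x t j = g2 F j (x, t) :=
  aux_deriv_slice (contDiff_pi.mp hF j) x t

lemma key_deriv1 (c : ℝ) {F G : V3 → ℝ → V3} (hF : Smooth2 F) (hG : Smooth2 G)
    (i₁ i₂ j₁ j₂ k : Fin 3) (x : V3) (t : ℝ)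
    (h : ∀ s, pd i₁ (fun y => F y s j₁) x - pd i₂ (fun y => F y s j₂) x
        + dt G x s k + c * G x s k = 0) :
    pd i₁ (fun y => g2 F j₁ (y, t)) x - pd i₂ (fun y => g2 F j₂ (y, t)) x
      + fderiv ℝ (g2 G k) (x, t) (0, 1) + c * g2 G k (x, t) = 0 := by
  have H1 : HasDerivAt (fun s => pd i₁ (fun y => F y s j₁) x)
      (pd i₁ (fun y => g2 F j₁ (y, t)) x) t :=
    aux_pd_hasDerivAt (contDiff_pi.mp hF j₁) i₁ x t
  have H2 : HasDerivAt (fun s => pd i₂ (fun y => F y s j₂) x)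
      (pd i₂ (fun y => g2 F j₂ (y, t)) x) t :=
    aux_pd_hasDerivAt (contDiff_pi.mp hF j₂) i₂ x t
  have H3 : HasDerivAt (fun s => dt G x s k) (fderiv ℝ (g2 G k) (x, t) (0, 1)) t := by
    have e : (fun s => dt G x s k) = fun s => g2 G k (x, s) := funext fun s => dt_eq hG x s k
    rw [e]; exact aux_hasDerivAt_slice2 (g2_smooth hG k) x t
  have H4 : HasDerivAt (fun s => c * G x s k) (c * g2 G k (x, t)) t :=
    (aux_hasDerivAt_slice2 (contDiff_pi.mp hG k) x t).const_mul c
  have Hsum : HasDerivAt (fun s => pd i₁ (fun y => F y s j₁) x - pd i₂ (fun y => F y s j₂) x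
      + dt G x s k + c * G x s k)
      (pd i₁ (fun y => g2 F j₁ (y, t)) x - pd i₂ (fun y => g2 F j₂ (y, t)) x
        + fderiv ℝ (g2 G k) (x, t) (0, 1) + c * g2 G k (x, t)) t :=
    ((H1.sub H2).add H3).add H4
  have hfun : (fun s => pd i₁ (fun y => F y s j₁) x - pd i₂ (fun y => F y s j₂) x
      + dt G x s k + c * G x s k) = fun _ => (0 : ℝ) := funext h
  rw [hfun] at Hsum
  simpa using Hsum.unique (hasDerivAt_const t 0)

lemma key_deriv2 (c : ℝ) {F G : V3 → ℝ → V3} (hF : Smooth2 F) (hG : Smooth2 G)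
    (i₁ i₂ j₁ j₂ k : Fin 3) (x : V3) (t : ℝ)
    (h : ∀ s, pd i₁ (fun y => F y s j₁) x - pd i₂ (fun y => F y s j₂) x
        - dt G x s k - c * G x s k = 0) :
    pd i₁ (fun y => g2 F j₁ (y, t)) x - pd i₂ (fun y => g2 F j₂ (y, t)) x
      - fderiv ℝ (g2 G k) (x, t) (0, 1) - c * g2 G k (x, t) = 0 := by
  have H1 : HasDerivAt (fun s => pd i₁ (fun y => F y s j₁) x)
      (pd i₁ (fun y => g2 F j₁ (y, t)) x) t :=
    aux_pd_hasDerivAt (contDiff_pi.mp hF j₁) i₁ x t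
  have H2 : HasDerivAt (fun s => pd i₂ (fun y => F y s j₂) x)
      (pd i₂ (fun y => g2 F j₂ (y, t)) x) t :=
    aux_pd_hasDerivAt (contDiff_pi.mp hF j₂) i₂ x t
  have H3 : HasDerivAt (fun s => dt G x s k) (fderiv ℝ (g2 G k) (x, t) (0, 1)) t := by
    have e : (fun s => dt G x s k) = fun s => g2 G k (x, s) := funext fun s => dt_eq hG x s k
    rw [e]; exact aux_hasDerivAt_slice2 (g2_smooth hG k) x t
  have H4 : HasDerivAt (fun s => c * G x s k) (c * g2 G k (x, t)) t :=
    (aux_hasDerivAt_slice2 (contDiff_pi.mp hG k) x t).const_mul c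
  have Hsum : HasDerivAt (fun s => pd i₁ (fun y => F y s j₁) x - pd i₂ (fun y => F y s j₂) x
      - dt G x s k - c * G x s k)
      (pd i₁ (fun y => g2 F j₁ (y, t)) x - pd i₂ (fun y => g2 F j₂ (y, t)) x
        - fderiv ℝ (g2 G k) (x, t) (0, 1) - c * g2 G k (x, t)) t :=
    ((H1.sub H2).sub H3).sub H4
  have hfun : (fun s => pd i₁ (fun y => F y s j₁) x - pd i₂ (fun y => F y s j₂) x
      - dt G x s k - c * G x s k) = fun _ => (0 : ℝ) := funext h
  rw [hfun] at Hsum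
  simpa using Hsum.unique (hasDerivAt_const t 0)

/-- the two-solution representation of the energy (time-translation)
conservation law. -/
theorem stmt10 (σe σm : ℝ) (E B E' B' : V3 → ℝ → V3)
    (hE : Smooth2 E) (hB : Smooth2 B) (hE' : Smooth2 E') (hB' : Smooth2 B')
    (h1 : ∀ x t, curl3 (fun y => E y t) x + dt B x t + σm • B x t = 0)
    (h2 : ∀ x t, curl3 (fun y => B y t) x - dt E x t - σe • E x t = 0)
    (h1' : ∀ x t, curl3 (fun y => E' y t) x + dt B' x t + σm • B' x t = 0)
    (h2' : ∀ x t, curl3 (fun y => B' y t) x - dt E' x t - σe • E' x t = 0) :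
    ∀ x t,
      deriv (fun s => dot3 (dt E x s) (E' x (-s)) - dot3 (dt B x s) (B' x (-s))) t
        + div3 (fun y =>
            cross3 (B' y (-t)) (dt E y t) + cross3 (E' y (-t)) (dt B y t)) x
        = 0 := by
  intro x t
  -- time derivatives of the dt fields
  have hA : ∀ (F : V3 → ℝ → V3), Smooth2 F → ∀ j : Fin 3,
      HasDerivAt (fun s => dt F x s j) (fderiv ℝ (g2 F j) (x, t) (0, 1)) t := by
    intro F hF j
    have e : (fun s => dt F x s j) = fun s => g2 F j (x, s) := funext fun s => dt_eq hF x s j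
    rw [e]; exact aux_hasDerivAt_slice2 (g2_smooth hF j) x t
  have hA' : ∀ (F : V3 → ℝ → V3), Smooth2 F → ∀ j : Fin 3,
      HasDerivAt (fun s => F x (-s) j) (-(g2 F j (x, -t))) t := by
    intro F hF j
    have h0 : HasDerivAt (fun s : ℝ => -s) (-1) t := (hasDerivAt_id t).neg
    have h1 : HasDerivAt (fun s => (fun p : V3 × ℝ => F p.1 p.2 j) (x, s))
        (g2 F j (x, -t)) (-t) := aux_hasDerivAt_slice2 (contDiff_pi.mp hF j) x (-t)
    have h2 : HasDerivAt (fun s : ℝ => F x (-s) j) (g2 F j (x, -t) * (-1)) t := h1.comp t h0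
    rw [mul_neg_one] at h2
    exact h2
  -- Step A: the time derivative term
  have hTau : deriv (fun s => dot3 (dt E x s) (E' x (-s)) - dot3 (dt B x s) (B' x (-s))) t
      = (fderiv ℝ (g2 E 0) (x, t) (0, 1) * E' x (-t) 0 + dt E x t 0 * -(g2 E' 0 (x, -t))
          + (fderiv ℝ (g2 E 1) (x, t) (0, 1) * E' x (-t) 1 + dt E x t 1 * -(g2 E' 1 (x, -t)))
          + (fderiv ℝ (g2 E 2) (x, t) (0, 1) * E' x (-t) 2 + dt E x t 2 * -(g2 E' 2 (x, -t))))
        - (fderiv ℝ (g2 B 0) (x, t) (0, 1) * B' x (-t) 0 + dt B x t 0 * -(g2 B' 0 (x, -t))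
          + (fderiv ℝ (g2 B 1) (x, t) (0, 1) * B' x (-t) 1 + dt B x t 1 * -(g2 B' 1 (x, -t)))
          + (fderiv ℝ (g2 B 2) (x, t) (0, 1) * B' x (-t) 2 + dt B x t 2 * -(g2 B' 2 (x, -t)))) :=
    (((((hA E hE 0).mul (hA' E' hE' 0)).add ((hA E hE 1).mul (hA' E' hE' 1))).add
        ((hA E hE 2).mul (hA' E' hE' 2))).sub
      ((((hA B hB 0).mul (hA' B' hB' 0)).add ((hA B hB 1).mul (hA' B' hB' 1))).add
        ((hA B hB 2).mul (hA' B' hB' 2)))).deriv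
  -- differentiability packs
  have hdg : ∀ (F : V3 → ℝ → V3), Smooth2 F → ∀ j : Fin 3,
      DifferentiableAt ℝ (fun y => g2 F j (y, t)) x :=
    fun F hF j => aux_diff_slice1 (g2_smooth hF j) x t
  have hdp : ∀ (F : V3 → ℝ → V3), Smooth2 F → ∀ j : Fin 3,
      DifferentiableAt ℝ (fun y => F y (-t) j) x :=
    fun F hF j => aux_diff_slice1 (contDiff_pi.mp hF j) x (-t)
  have hcd : ∀ (P Q : V3 → V3), (∀ j, DifferentiableAt ℝ (fun y => P y j) x) →
      (∀ j, DifferentiableAt ℝ (fun y => Q y j) x) →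
      ∀ j, DifferentiableAt ℝ (fun y => cross3 (P y) (Q y) j) x := by
    intro P Q hP hQ j
    fin_cases j <;>
      simp only [cross3, Matrix.cons_val_zero, Matrix.cons_val_one, Matrix.head_cons,
        Matrix.cons_val_two, Matrix.tail_cons, Fin.isValue] <;>
      exact ((hP _).mul (hQ _)).sub ((hP _).mul (hQ _))
  -- rewrite the flux field via g2
  have hrw : (fun y => cross3 (B' y (-t)) (dt E y t) + cross3 (E' y (-t)) (dt B y t))
      = fun y => cross3 (B' y (-t)) (fun j => g2 E j (y, t))
          + cross3 (E' y (-t)) (fun j => g2 B j (y, t)) := by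
    funext y
    have e1 : dt E y t = fun j => g2 E j (y, t) := funext fun j => dt_eq hE y t j
    have e2 : dt B y t = fun j => g2 B j (y, t) := funext fun j => dt_eq hB y t j
    rw [e1, e2]
  have hsplit : div3 (fun y => cross3 (B' y (-t)) (fun j => g2 E j (y, t))
        + cross3 (E' y (-t)) (fun j => g2 B j (y, t))) x
      = div3 (fun y => cross3 (B' y (-t)) (fun j => g2 E j (y, t))) x
        + div3 (fun y => cross3 (E' y (-t)) (fun j => g2 B j (y, t))) x :=
    div3_add (hcd _ _ (hdp B' hB') (hdg E hE)) (hcd _ _ (hdp E' hE') (hdg B hB))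
  have hc1 : div3 (fun y => cross3 (B' y (-t)) (fun j => g2 E j (y, t))) x
      = dot3 (fun j => g2 E j (x, t)) (curl3 (fun y => B' y (-t)) x)
        - dot3 (B' x (-t)) (curl3 (fun y => (fun j => g2 E j (y, t)) : V3 → V3) x) :=
    div3_cross (hdp B' hB') (hdg E hE)
  have hc2 : div3 (fun y => cross3 (E' y (-t)) (fun j => g2 B j (y, t))) x
      = dot3 (fun j => g2 B j (x, t)) (curl3 (fun y => E' y (-t)) x)
        - dot3 (E' x (-t)) (curl3 (fun y => (fun j => g2 B j (y, t)) : V3 → V3) x) :=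
    div3_cross (hdp E' hE') (hdg B hB)
  -- unprimed equations differentiated in time
  have u10 := key_deriv1 σm hE hB 1 2 2 1 0 x t (fun s => by
    have := congrFun (h1 x s) 0; simpa [curl3, Matrix.vecHead, Matrix.vecTail] using this)
  have u11 := key_deriv1 σm hE hB 2 0 0 2 1 x t (fun s => by
    have := congrFun (h1 x s) 1; simpa [curl3, Matrix.vecHead, Matrix.vecTail] using this)
  have u12 := key_deriv1 σm hE hB 0 1 1 0 2 x t (fun s => by
    have := congrFun (h1 x s) 2; simpa [curl3, Matrix.vecHead, Matrix.vecTail] using this)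
  have v10 := key_deriv2 σe hB hE 1 2 2 1 0 x t (fun s => by
    have := congrFun (h2 x s) 0; simpa [curl3, Matrix.vecHead, Matrix.vecTail] using this)
  have v11 := key_deriv2 σe hB hE 2 0 0 2 1 x t (fun s => by
    have := congrFun (h2 x s) 1; simpa [curl3, Matrix.vecHead, Matrix.vecTail] using this)
  have v12 := key_deriv2 σe hB hE 0 1 1 0 2 x t (fun s => by
    have := congrFun (h2 x s) 2; simpa [curl3, Matrix.vecHead, Matrix.vecTail] using this)
  -- primed equations at time -t
  have p10 : pd 1 (fun y => E' y (-t) 2) x - pd 2 (fun y => E' y (-t) 1) x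
      + g2 B' 0 (x, -t) + σm * B' x (-t) 0 = 0 := by
    have := congrFun (h1' x (-t)) 0; simpa only [curl3, Pi.add_apply, Pi.smul_apply, smul_eq_mul, Pi.zero_apply,
      Matrix.cons_val_zero, Matrix.cons_val_one, Matrix.head_cons, Matrix.cons_val_two,
      Matrix.tail_cons, dt_eq hB'] using this
  have p11 : pd 2 (fun y => E' y (-t) 0) x - pd 0 (fun y => E' y (-t) 2) x
      + g2 B' 1 (x, -t) + σm * B' x (-t) 1 = 0 := by
    have := congrFun (h1' x (-t)) 1; simpa only [curl3, Pi.add_apply, Pi.smul_apply, smul_eq_mul, Pi.zero_apply,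
      Matrix.cons_val_zero, Matrix.cons_val_one, Matrix.head_cons, Matrix.cons_val_two,
      Matrix.tail_cons, dt_eq hB'] using this
  have p12 : pd 0 (fun y => E' y (-t) 1) x - pd 1 (fun y => E' y (-t) 0) x
      + g2 B' 2 (x, -t) + σm * B' x (-t) 2 = 0 := by
    have := congrFun (h1' x (-t)) 2; simpa only [curl3, Pi.add_apply, Pi.smul_apply, smul_eq_mul, Pi.zero_apply,
      Matrix.cons_val_zero, Matrix.cons_val_one, Matrix.head_cons, Matrix.cons_val_two,
      Matrix.tail_cons, dt_eq hB'] using this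
  have q10 : pd 1 (fun y => B' y (-t) 2) x - pd 2 (fun y => B' y (-t) 1) x
      - g2 E' 0 (x, -t) - σe * E' x (-t) 0 = 0 := by
    have := congrFun (h2' x (-t)) 0; simpa only [curl3, Pi.sub_apply, Pi.smul_apply, smul_eq_mul, Pi.zero_apply,
      Matrix.cons_val_zero, Matrix.cons_val_one, Matrix.head_cons, Matrix.cons_val_two,
      Matrix.tail_cons, dt_eq hE'] using this
  have q11 : pd 2 (fun y => B' y (-t) 0) x - pd 0 (fun y => B' y (-t) 2) x
      - g2 E' 1 (x, -t) - σe * E' x (-t) 1 = 0 := by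
    have := congrFun (h2' x (-t)) 1; simpa only [curl3, Pi.sub_apply, Pi.smul_apply, smul_eq_mul, Pi.zero_apply,
      Matrix.cons_val_zero, Matrix.cons_val_one, Matrix.head_cons, Matrix.cons_val_two,
      Matrix.tail_cons, dt_eq hE'] using this
  have q12 : pd 0 (fun y => B' y (-t) 1) x - pd 1 (fun y => B' y (-t) 0) x
      - g2 E' 2 (x, -t) - σe * E' x (-t) 2 = 0 := by
    have := congrFun (h2' x (-t)) 2; simpa only [curl3, Pi.sub_apply, Pi.smul_apply, smul_eq_mul, Pi.zero_apply,
      Matrix.cons_val_zero, Matrix.cons_val_one, Matrix.head_cons, Matrix.cons_val_two,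
      Matrix.tail_cons, dt_eq hE'] using this
  rw [hTau, hrw, hsplit, hc1, hc2]
  simp only [dt_eq hE, dt_eq hB, dot3, curl3, Matrix.cons_val_zero, Matrix.cons_val_one,
    Matrix.head_cons, Matrix.cons_val_two, Matrix.tail_cons]
  linear_combination
    g2 E 0 (x, t) * q10 + g2 E 1 (x, t) * q11 + g2 E 2 (x, t) * q12
    - B' x (-t) 0 * u10 - B' x (-t) 1 * u11 - B' x (-t) 2 * u12
    + g2 B 0 (x, t) * p10 + g2 B 1 (x, t) * p11 + g2 B 2 (x, t) * p12
    - E' x (-t) 0 * v10 - E' x (-t) 1 * v11 - E' x (-t) 2 * v12
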